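/- arXiv:2603.14508 — 2 statements merged into one kernel-verified Lean document; each statement's English description precedes it below -/
import Mathlib

section
/- Let n be odd, let p be a permutation of {1,...,n}, and let q be obtained from p by inserting the even value n+1 into a T1-gap of p (a position i with p_i > p_{i+1}, p_i odd, p_{i+1} even). Then A(q) = A(p) + 1, B(q) = B(p) - 1, D(q) = D(p) + 1, C(q) = C(p), and E(q) = E(p). -/
open List
open scoped Classical

/-- adjacent pairs of a list -/
def pairs (l : List ℕ) : List (ℕ × ℕ) := l.zip l.tail

/-- `l` is a permutation (as a word) of `{1, ..., n}` -/
def IsPermOf (n : ℕ) (l : List ℕ) : Prop := l.Perm (List.range' 1 n)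

def T1 (l : List ℕ) : ℕ := (pairs l).countP (fun q => decide (q.2 < q.1 ∧ Odd q.1 ∧ Even q.2))
def T2 (l : List ℕ) : ℕ := (pairs l).countP (fun q => decide (q.1 < q.2 ∧ Odd q.1 ∧ Odd q.2))
def T3 (l : List ℕ) : ℕ := (pairs l).countP (fun q => decide (q.2 < q.1 ∧ Odd q.1 ∧ Odd q.2))
def S10 (l : List ℕ) : ℕ := (pairs l).countP (fun q => decide (q.2 < q.1 ∧ Odd q.1))
def S12 (l : List ℕ) : ℕ := (pairs l).countP (fun q => decide (Odd q.1 ∧ Odd q.2))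

/-- largest `i` such that the values `1, ..., i` appear in left-to-right order in `l` -/
def S17 (l : List ℕ) : ℕ :=
  Nat.findGreatest (fun i => ∀ j < i, 1 ≤ j → l.idxOf j < l.idxOf (j + 1)) l.length

def statA (l : List ℕ) : ℕ :=
  (pairs l).countP (fun q => decide (Even q.1 ∧ Even q.2)) + (if Even (l.headD 1) then 1 else 0)
def statB (l : List ℕ) : ℕ :=
  (pairs l).countP (fun q => decide (q.2 < q.1 ∧ Odd q.1)) + (if Odd (l.getLastD 0) then 1 else 0)
def statC (l : List ℕ) : ℕ :=
  (pairs l).countP (fun q => decide ((Even q.1 ∧ Odd q.2) ∨ (q.1 < q.2 ∧ Odd q.1 ∧ Odd q.2))) +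
    (if Odd (l.headD 0) then 1 else 0)
def statD (l : List ℕ) : ℕ :=
  (pairs l).countP (fun q => decide (q.1 < q.2 ∧ Odd q.1 ∧ Even q.2))
def statE (l : List ℕ) : ℕ := if Even (l.getLastD 1) then 1 else 0

/-- the `i`-th entry of `l` (0-indexed), default 0 -/
def entry (l : List ℕ) (i : ℕ) : ℕ := l.getD i 0

/-- inserting `m` at gap `j` of `l` -/
def insertGap (l : List ℕ) (j : ℕ) (m : ℕ) : List ℕ := l.take j ++ m :: l.drop j

def IsAGap (l : List ℕ) (j : ℕ) : Prop :=
  (j = 0 ∧ Even (l.headD 1)) ∨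
  (1 ≤ j ∧ j < l.length ∧ Even (entry l (j - 1)) ∧ Even (entry l j))

def IsBGap (l : List ℕ) (j : ℕ) : Prop :=
  (1 ≤ j ∧ j < l.length ∧ entry l j < entry l (j - 1) ∧ Odd (entry l (j - 1))) ∨
  (j = l.length ∧ Odd (l.getLastD 0))

def IsCGap (l : List ℕ) (j : ℕ) : Prop :=
  (j = 0 ∧ Odd (l.headD 0)) ∨
  (1 ≤ j ∧ j < l.length ∧ ((Even (entry l (j - 1)) ∧ Odd (entry l j)) ∨
    (entry l (j - 1) < entry l j ∧ Odd (entry l (j - 1)) ∧ Odd (entry l j))))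

def IsDGap (l : List ℕ) (j : ℕ) : Prop :=
  1 ≤ j ∧ j < l.length ∧ entry l (j - 1) < entry l j ∧ Odd (entry l (j - 1)) ∧ Even (entry l j)

def IsEGap (l : List ℕ) (j : ℕ) : Prop := j = l.length ∧ Even (l.getLastD 1)

/-- the word `p_1 p_2 ... p_n` (values in `{1,...,n}`) of a permutation of `Fin n` -/
def word (n : ℕ) (p : Equiv.Perm (Fin n)) : List ℕ := List.ofFn (fun i => (p i : ℕ) + 1)

/-!
Inserting `m` between adjacent entries `x` and `y` trades the adjacent pair `(x, y)` for the two
pairs `(x, m)` and `(m, y)` and keeps the first and last entries, so every statistic changes by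
the contributions of the two new pairs minus that of the lost one. At a descent `x > y` with `x`
odd and `y` even, and with `m = n + 1` even and larger than every entry, the lost pair counts only
for `B`, the pair `(x, m)` only for `D`, and `(m, y)` only for `A`.
-/

theorem pairs_cons_cons (a b : ℕ) (l : List ℕ) : pairs (a :: b :: l) = (a, b) :: pairs (b :: l) :=
  rfl

theorem pairs_append_cons (s : List ℕ) (x : ℕ) (t : List ℕ) :
    pairs (s ++ x :: t) = pairs (s ++ [x]) ++ pairs (x :: t) := by
  induction s with
  | nil => rfl
  | cons a s ih =>
    cases s with
    | nil => rfl
    | cons b s => exact congrArg ((a, b) :: ·) ih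

theorem countP_pairs_insert (f : ℕ × ℕ → Bool) (u v : List ℕ) (x m y : ℕ) :
    (pairs (u ++ x :: m :: y :: v)).countP f + (if f (x, y) then 1 else 0) =
      (pairs (u ++ x :: y :: v)).countP f + (if f (x, m) then 1 else 0) +
        (if f (m, y) then 1 else 0) := by
  rw [pairs_append_cons u x (m :: y :: v), pairs_append_cons u x (y :: v)]
  simp only [countP_append, pairs_cons_cons, countP_cons]
  omega

theorem entry_mem {l : List ℕ} {i : ℕ} (h : i < l.length) : entry l i ∈ l := by
  rw [entry, getD_eq_getElem _ _ h]
  exact getElem_mem h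

theorem take_succ_eq_append_entry {l : List ℕ} {i : ℕ} (h : i < l.length) :
    l.take (i + 1) = l.take i ++ [entry l i] := by
  rw [entry, getD_eq_getElem _ _ h, take_concat_get']

theorem drop_eq_entry_cons {l : List ℕ} {i : ℕ} (h : i < l.length) :
    l.drop i = entry l i :: l.drop (i + 1) := by
  rw [entry, getD_eq_getElem _ _ h]
  exact drop_eq_getElem_cons h

theorem eq_take_append_entry_cons_entry {l : List ℕ} {i : ℕ} (h : i + 1 < l.length) :
    l = l.take i ++ entry l i :: entry l (i + 1) :: l.drop (i + 2) := by
  rw [← drop_eq_entry_cons h, ← drop_eq_entry_cons (Nat.lt_of_succ_lt h), take_append_drop]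

theorem insertGap_succ {l : List ℕ} {i : ℕ} (h : i + 1 < l.length) (m : ℕ) :
    insertGap l (i + 1) m = l.take i ++ entry l i :: m :: entry l (i + 1) :: l.drop (i + 2) := by
  rw [insertGap, take_succ_eq_append_entry (Nat.lt_of_succ_lt h), drop_eq_entry_cons h,
    append_assoc]
  rfl

section InsertBetween

variable (u v : List ℕ) {x m y : ℕ}

theorem headD_insert (d : ℕ) : (u ++ x :: m :: y :: v).headD d = (u ++ x :: y :: v).headD d := by
  cases u <;> rfl

theorem getLastD_insert (d : ℕ) :
    (u ++ x :: m :: y :: v).getLastD d = (u ++ x :: y :: v).getLastD d := by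
  simp [getLastD_eq_getLast?, getLast?_append, getLast?_cons]

theorem statA_insert (hx : Odd x) (hm : Even m) (hy : Even y) :
    statA (u ++ x :: m :: y :: v) = statA (u ++ x :: y :: v) + 1 := by
  have := countP_pairs_insert (fun q => decide (Even q.1 ∧ Even q.2)) u v x m y
  simp only [decide_eq_true_eq, Nat.not_even_iff_odd.mpr hx, hm, hy, false_and, and_self,
    if_false, if_true] at this
  simp only [statA, headD_insert]
  omega

theorem statB_insert (hx : Odd x) (hm : Even m) (hyx : y < x) (hxm : x < m) :
    statB (u ++ x :: m :: y :: v) = statB (u ++ x :: y :: v) - 1 := by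
  have := countP_pairs_insert (fun q => decide (q.2 < q.1 ∧ Odd q.1)) u v x m y
  simp only [decide_eq_true_eq, hyx, hx, Nat.not_odd_iff_even.mpr hm, not_lt_of_gt hxm,
    and_self, and_false, false_and, if_false, if_true] at this
  simp only [statB, getLastD_insert]
  omega

theorem statC_insert (hx : Odd x) (hm : Even m) (hy : Even y) :
    statC (u ++ x :: m :: y :: v) = statC (u ++ x :: y :: v) := by
  have := countP_pairs_insert
    (fun q => decide ((Even q.1 ∧ Odd q.2) ∨ (q.1 < q.2 ∧ Odd q.1 ∧ Odd q.2))) u v x m y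
  simp only [decide_eq_true_eq, Nat.not_even_iff_odd.mpr hx, Nat.not_odd_iff_even.mpr hm,
    Nat.not_odd_iff_even.mpr hy, and_false, or_self, if_false] at this
  simp only [statC, headD_insert]
  omega

theorem statD_insert (hx : Odd x) (hm : Even m) (hyx : y < x) (hxm : x < m) :
    statD (u ++ x :: m :: y :: v) = statD (u ++ x :: y :: v) + 1 := by
  have := countP_pairs_insert (fun q => decide (q.1 < q.2 ∧ Odd q.1 ∧ Even q.2)) u v x m y
  simp only [decide_eq_true_eq, hxm, hx, hm, not_lt_of_gt hyx, not_lt_of_gt (hyx.trans hxm),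
    and_self, false_and, if_false, if_true] at this
  simp only [statD]
  omega

theorem statE_insert : statE (u ++ x :: m :: y :: v) = statE (u ++ x :: y :: v) := by
  simp only [statE, getLastD_insert]

end InsertBetween

theorem stmt9 (n : ℕ) (hn : Odd n) (l : List ℕ) (hl : IsPermOf n l) (j : ℕ)
    (hj1 : 1 ≤ j) (hj2 : j < n)
    (hgap : entry l j < entry l (j - 1) ∧ Odd (entry l (j - 1)) ∧ Even (entry l j))
    (q : List ℕ) (hq : q = insertGap l j (n + 1)) :
    statA q = statA l + 1 ∧ statB q = statB l - 1 ∧ statD q = statD l + 1 ∧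
    statC q = statC l ∧ statE q = statE l := by
  obtain ⟨i, rfl⟩ : ∃ i, j = i + 1 := ⟨j - 1, by omega⟩
  obtain ⟨hyx, hx, hy⟩ := hgap
  rw [Nat.add_sub_cancel] at hyx hx
  have hi : i + 1 < l.length := by rwa [hl.length_eq, length_range']
  have hxn : entry l i < n + 1 := by
    have := mem_range'_1.mp (hl.subset (entry_mem (Nat.lt_of_succ_lt hi)))
    omega
  have hm : Even (n + 1) := hn.add_one
  rw [hq, insertGap_succ hi]
  have hsplit := eq_take_append_entry_cons_entry hi
  -- abbreviating the pieces of `l` makes `rw [hsplit]` touch only the remaining bare `l`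
  set x := entry l i
  set y := entry l (i + 1)
  set u := l.take i
  set v := l.drop (i + 2)
  rw [hsplit]
  exact ⟨statA_insert _ _ hx hm hy, statB_insert _ _ hx hm hyx hxn, statD_insert _ _ hx hm hyx hxn,
    statC_insert _ _ hx hm hy, statE_insert _ _⟩
end

section
/- Let n be odd, let p be a permutation of {1,...,n}, and let q be obtained from p by inserting n+1 into a T2-gap of p (a position i with p_i < p_{i+1}, both p_i and p_{i+1} odd). Then C(q) = C(p), D(q) = D(p) + 1, A(q) = A(p), B(q) = B(p), and E(q) = E(p). -/
open List
open scoped Classical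

/-!
Inserting the even maximum `m` into an odd ascent `a < b` replaces the adjacent pair `(a, b)` by
`(a, m), (m, b)` and keeps the first and last letters, so every statistic changes only by the
contributions of these three pairs: `(a, b)` and `(m, b)` count for `C`, `(a, m)` for `D`, and
none of them for `A` or `B`.
-/

lemma pairs_append_cons_s10 (xs : List ℕ) (a : ℕ) (ys : List ℕ) :
    pairs (xs ++ a :: ys) = pairs (xs ++ [a]) ++ pairs (a :: ys) := by
  induction xs with
  | nil => rfl
  | cons x xs ih =>
    cases xs with
    | nil => rfl
    | cons y rest => exact congrArg ((x, y) :: ·) ih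

lemma take_append_entry_cons_entry_cons_drop {l : List ℕ} {j : ℕ} (hj1 : 1 ≤ j)
    (hj : j < l.length) :
    l.take (j - 1) ++ entry l (j - 1) :: entry l j :: l.drop (j + 1) = l := by
  obtain ⟨i, rfl⟩ : ∃ i, j = i + 1 := ⟨j - 1, by omega⟩
  simp only [entry, Nat.add_sub_cancel, List.getD_eq_getElem _ _ hj,
    List.getD_eq_getElem _ _ (Nat.lt_of_succ_lt hj)]
  rw [← List.drop_eq_getElem_cons hj, ← List.drop_eq_getElem_cons, List.take_append_drop]

lemma insertGap_eq_take_append_entry_cons {l : List ℕ} {j : ℕ} (hj1 : 1 ≤ j)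
    (hj : j < l.length) (m : ℕ) :
    insertGap l j m = l.take (j - 1) ++ entry l (j - 1) :: m :: entry l j :: l.drop (j + 1) := by
  obtain ⟨i, rfl⟩ : ∃ i, j = i + 1 := ⟨j - 1, by omega⟩
  simp only [insertGap, entry, Nat.add_sub_cancel, List.getD_eq_getElem _ _ hj,
    List.getD_eq_getElem _ _ (Nat.lt_of_succ_lt hj), ← List.drop_eq_getElem_cons hj]
  rw [List.take_add_one, List.getElem?_eq_getElem (Nat.lt_of_succ_lt hj), Option.toList_some,
    List.append_assoc, List.singleton_append]

lemma entry_le_of_isPermOf {n : ℕ} {l : List ℕ} (hl : IsPermOf n l) (i : ℕ) : entry l i ≤ n := by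
  rcases lt_or_ge i l.length with hi | hi
  · have hmem : entry l i ∈ List.range' 1 n :=
      hl.subset (by rw [entry, List.getD_eq_getElem _ _ hi]; exact List.getElem_mem hi)
    rw [List.mem_range'_1] at hmem
    omega
  · rw [entry, List.getD_eq_default _ _ hi]
    exact Nat.zero_le n

section InsertBetween

variable (A B : List ℕ) {a m b : ℕ}

variable (a m b) in
lemma countP_pairs_insert_between (p : ℕ × ℕ → Bool) :
    (pairs (A ++ a :: m :: b :: B)).countP p + (p (a, b)).toNat =
      (pairs (A ++ a :: b :: B)).countP p + (p (a, m)).toNat + (p (m, b)).toNat := by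
  rw [pairs_append_cons_s10 A a (m :: b :: B), pairs_append_cons_s10 A a (b :: B)]
  simp only [pairs, List.tail_cons, List.zip_cons_cons, List.countP_append, List.countP_cons]
  cases p (a, b) <;> cases p (a, m) <;> cases p (m, b) <;>
    simp only [Bool.toNat_true, Bool.toNat_false, if_true, if_false, Bool.false_eq_true] <;> omega

lemma headD_insert_between (d : ℕ) :
    (A ++ a :: m :: b :: B).headD d = (A ++ a :: b :: B).headD d := by
  cases A <;> rfl

lemma getLastD_insert_between (d : ℕ) :
    (A ++ a :: m :: b :: B).getLastD d = (A ++ a :: b :: B).getLastD d := by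
  simp [List.getLastD_eq_getLast?, List.getLast?_append]

lemma statC_insert_between (ha : Odd a) (hb : Odd b) (hab : a < b) (hm : Even m) :
    statC (A ++ a :: m :: b :: B) = statC (A ++ a :: b :: B) := by
  have h := countP_pairs_insert_between A B a m b
    (fun q => decide ((Even q.1 ∧ Odd q.2) ∨ (q.1 < q.2 ∧ Odd q.1 ∧ Odd q.2)))
  simp only [Nat.not_even_iff_odd.mpr ha, Nat.not_odd_iff_even.mpr hm, hm, hb, ha, hab,
    and_true, and_false, or_false, false_or, decide_true, decide_false,
    Bool.toNat_true, Bool.toNat_false] at h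
  rw [statC, statC, headD_insert_between]
  omega

lemma statD_insert_between (ha : Odd a) (hb : Odd b) (ham : a < m) (hm : Even m) :
    statD (A ++ a :: m :: b :: B) = statD (A ++ a :: b :: B) + 1 := by
  have h := countP_pairs_insert_between A B a m b
    (fun q => decide (q.1 < q.2 ∧ Odd q.1 ∧ Even q.2))
  simp only [Nat.not_even_iff_odd.mpr hb, Nat.not_odd_iff_even.mpr hm, hm, ha, ham,
    and_true, and_false, decide_true, decide_false,
    Bool.toNat_true, Bool.toNat_false] at h
  rw [statD, statD]
  omega

lemma statA_insert_between (ha : Odd a) (hb : Odd b) :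
    statA (A ++ a :: m :: b :: B) = statA (A ++ a :: b :: B) := by
  have h := countP_pairs_insert_between A B a m b (fun q => decide (Even q.1 ∧ Even q.2))
  simp only [Nat.not_even_iff_odd.mpr ha, Nat.not_even_iff_odd.mpr hb,
    and_false, false_and, decide_false, Bool.toNat_false] at h
  rw [statA, statA, headD_insert_between]
  omega

lemma statB_insert_between (hab : a < b) (ham : a < m) (hm : Even m) :
    statB (A ++ a :: m :: b :: B) = statB (A ++ a :: b :: B) := by
  have h := countP_pairs_insert_between A B a m b (fun q => decide (q.2 < q.1 ∧ Odd q.1))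
  simp only [Nat.not_lt.mpr hab.le, Nat.not_lt.mpr ham.le, Nat.not_odd_iff_even.mpr hm,
    and_false, false_and, decide_false, Bool.toNat_false] at h
  rw [statB, statB, getLastD_insert_between]
  omega

lemma statE_insert_between :
    statE (A ++ a :: m :: b :: B) = statE (A ++ a :: b :: B) := by
  rw [statE, statE, getLastD_insert_between]

end InsertBetween

theorem stmt10 (n : ℕ) (hn : Odd n) (l : List ℕ) (hl : IsPermOf n l) (j : ℕ)
    (hj1 : 1 ≤ j) (hj2 : j < n)
    (hgap : entry l (j - 1) < entry l j ∧ Odd (entry l (j - 1)) ∧ Odd (entry l j))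
    (q : List ℕ) (hq : q = insertGap l j (n + 1)) :
    statC q = statC l ∧ statD q = statD l + 1 ∧ statA q = statA l ∧
    statB q = statB l ∧ statE q = statE l := by
  obtain ⟨hab, ha, hb⟩ := hgap
  have hjl : j < l.length := by rwa [hl.length_eq, List.length_range']
  have ham : entry l (j - 1) < n + 1 := Nat.lt_succ_of_le (entry_le_of_isPermOf hl _)
  have hm : Even (n + 1) := hn.add_one
  have hsplit := take_append_entry_cons_entry_cons_drop hj1 hjl
  rw [hq, insertGap_eq_take_append_entry_cons hj1 hjl]
  refine ⟨?_, ?_, ?_, ?_, ?_⟩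
  · rw [statC_insert_between _ _ ha hb hab hm, hsplit]
  · rw [statD_insert_between _ _ ha hb ham hm, hsplit]
  · rw [statA_insert_between _ _ ha hb, hsplit]
  · rw [statB_insert_between _ _ hab ham hm, hsplit]
  · rw [statE_insert_between, hsplit]
end
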